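/- arXiv:1902.04881 — 2 statements merged into one kernel-verified Lean document; each statement's English description precedes it below -/
import Mathlib

section
/- Let k ∈ ℤ and let u : ℝ² → S² be a smooth k-equivariant map such that ω(u) is integrable on ℝ² and the limit a = lim_{|x|→∞} u₃(x) exists. Then the topological charge is Q(u) = (k/2)( u₃(0) − a ). -/
open MeasureTheory Filter

noncomputable section

/-- Euclidean dot product on `Fin 3 → ℝ`. -/
def dot3 (a b : Fin 3 → ℝ) : ℝ := a 0 * b 0 + a 1 * b 1 + a 2 * b 2

/-- Cross product on `Fin 3 → ℝ`. -/
def cross3 (a b : Fin 3 → ℝ) : Fin 3 → ℝ :=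
  ![a 1 * b 2 - a 2 * b 1, a 2 * b 0 - a 0 * b 2, a 0 * b 1 - a 1 * b 0]

/-- Euclidean norm on `Fin 3 → ℝ`. -/
def enorm3 (v : Fin 3 → ℝ) : ℝ := Real.sqrt (dot3 v v)

/-- Third standard basis vector `e₃`. -/
def e3 : Fin 3 → ℝ := ![0, 0, 1]

/-- Conformal factor λ(x) = 2/(1+|x|²) of the stereographic parametrization. -/
def lam (x : ℝ × ℝ) : ℝ := 2 / (1 + x.1 ^ 2 + x.2 ^ 2)

/-- Stereographic parametrization Φ : ℝ² → S² ⊂ ℝ³ (centered at the north pole):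
Φ(x) = λ(x)(x₁, x₂, (1-|x|²)/2). -/
def Phi (x : ℝ × ℝ) : Fin 3 → ℝ :=
  fun i => lam x * ![x.1, x.2, (1 - (x.1 ^ 2 + x.2 ^ 2)) / 2] i

/-- First partial derivative ∂₁ of a vector field on ℝ². -/
def pd1 (u : ℝ × ℝ → Fin 3 → ℝ) (x : ℝ × ℝ) : Fin 3 → ℝ := fderiv ℝ u x (1, 0)

/-- Second partial derivative ∂₂ of a vector field on ℝ². -/
def pd2 (u : ℝ × ℝ → Fin 3 → ℝ) (x : ℝ × ℝ) : Fin 3 → ℝ := fderiv ℝ u x (0, 1)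

/-- Topological vorticity ω(u) = u · (∂₁u × ∂₂u). -/
def vort (u : ℝ × ℝ → Fin 3 → ℝ) (x : ℝ × ℝ) : ℝ :=
  dot3 (u x) (cross3 (pd1 u x) (pd2 u x))

/-- Topological charge Q(u) = (1/4π) ∫ ω(u). -/
def Qdeg (u : ℝ × ℝ → Fin 3 → ℝ) : ℝ := (1 / (4 * Real.pi)) * ∫ x : ℝ × ℝ, vort u x

/-- Spin angular momentum S(u) = ∫ λ(x)² u(x) dx. -/
def Sspin (u : ℝ × ℝ → Fin 3 → ℝ) : Fin 3 → ℝ := ∫ x : ℝ × ℝ, lam x ^ 2 • u x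

/-- Orbital angular momentum L(u) = ∫ Φ(x) ω(u)(x) dx. -/
def Lorb (u : ℝ × ℝ → Fin 3 → ℝ) : Fin 3 → ℝ := ∫ x : ℝ × ℝ, vort u x • Phi x

/-- Total angular momentum J(u) = S(u) + L(u). -/
def Jmom (u : ℝ × ℝ → Fin 3 → ℝ) : Fin 3 → ℝ := Sspin u + Lorb u

/-- The micromagnetic energy in stereographic coordinates:
E(u) = (1/2) ∫ [|∇u|² + κ(1-(u·Φ)²)λ(x)²] dx. -/
def energy (κ : ℝ) (u : ℝ × ℝ → Fin 3 → ℝ) : ℝ :=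
  (1 / 2) * ∫ x : ℝ × ℝ,
    (dot3 (pd1 u x) (pd1 u x) + dot3 (pd2 u x) (pd2 u x)
      + κ * (1 - dot3 (u x) (Phi x) ^ 2) * lam x ^ 2)

/-- `u` takes values in the unit sphere S². -/
def SphereValued (u : ℝ × ℝ → Fin 3 → ℝ) : Prop := ∀ x, dot3 (u x) (u x) = 1

/-- Planar rotation ρ_θ of ℝ² by angle θ. -/
def rotPlane (θ : ℝ) (x : ℝ × ℝ) : ℝ × ℝ :=
  (Real.cos θ * x.1 - Real.sin θ * x.2, Real.sin θ * x.1 + Real.cos θ * x.2)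

/-- Rotation R_θ of ℝ³ by angle θ about the e₃-axis. -/
def rot3 (θ : ℝ) (v : Fin 3 → ℝ) : Fin 3 → ℝ :=
  ![Real.cos θ * v 0 - Real.sin θ * v 1, Real.sin θ * v 0 + Real.cos θ * v 1, v 2]

/-- k-equivariance: u(ρ_θ x) = R_{kθ} u(x) for all θ, x. -/
def IsEquivariant (k : ℤ) (u : ℝ × ℝ → Fin 3 → ℝ) : Prop :=
  ∀ (θ : ℝ) (x : ℝ × ℝ), u (rotPlane θ x) = rot3 ((k : ℝ) * θ) (u x)

/-- Planar Laplacian Δw = ∂₁₁w + ∂₂₂w of a vector field on ℝ². -/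
def lapP (w : ℝ × ℝ → Fin 3 → ℝ) (x : ℝ × ℝ) : Fin 3 → ℝ := pd1 (pd1 w) x + pd2 (pd2 w) x

/-- The Landau–Lifshitz equation in stereographic coordinates:
∂ₜu = u × (λ(x)⁻² Δu + κ (u·Φ) Φ). -/
def IsLLSolution (κ : ℝ) (u : ℝ → ℝ × ℝ → Fin 3 → ℝ) : Prop :=
  ∀ (t : ℝ) (x : ℝ × ℝ), deriv (fun s => u s x) t =
    cross3 (u t x) ((lam x ^ 2)⁻¹ • lapP (u t) x + (κ * dot3 (u t x) (Phi x)) • Phi x)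

/- ## Auxiliary lemmas -/

open Real Set

lemma equi_deriv (k : ℤ) (u : ℝ × ℝ → Fin 3 → ℝ) (hsm : ContDiff ℝ (⊤ : ℕ∞) u)
    (hequi : IsEquivariant k u) (x : ℝ × ℝ) :
    fderiv ℝ u x (-x.2, x.1) = fun i => (k : ℝ) * ![-(u x 1), u x 0, 0] i := by
  have hd := (hsm.differentiable (by simp) x).hasFDerivAt
  have hc : HasDerivAt (fun s : ℝ => rotPlane s x) (-x.2, x.1) 0 := by
    have h1 : HasDerivAt (fun s : ℝ => Real.cos s * x.1 - Real.sin s * x.2) (-x.2) 0 := by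
      exact (((Real.hasDerivAt_cos 0).mul_const x.1).sub
        ((Real.hasDerivAt_sin 0).mul_const x.2)).congr_deriv (by simp)
    have h2 : HasDerivAt (fun s : ℝ => Real.sin s * x.1 + Real.cos s * x.2) x.1 0 := by
      exact (((Real.hasDerivAt_sin 0).mul_const x.1).add
        ((Real.hasDerivAt_cos 0).mul_const x.2)).congr_deriv (by simp)
    exact HasDerivAt.prodMk h1 h2
  have h0 : rotPlane 0 x = x := by simp [rotPlane]
  have hL : HasDerivAt (fun s : ℝ => u (rotPlane s x)) (fderiv ℝ u x (-x.2, x.1)) 0 := by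
    have hd' : HasFDerivAt u (fderiv ℝ u x) (rotPlane 0 x) := by rw [h0]; exact hd
    exact hd'.comp_hasDerivAt (0 : ℝ) hc
  have hR : HasDerivAt (fun s : ℝ => rot3 ((k : ℝ) * s) (u x))
      (fun i => (k : ℝ) * ![-(u x 1), u x 0, 0] i) 0 := by
    rw [hasDerivAt_pi]
    intro i
    have hks : HasDerivAt (fun s : ℝ => (k : ℝ) * s) (k : ℝ) 0 := by
      simpa using (hasDerivAt_id (0:ℝ)).const_mul (k : ℝ)
    have hcos : HasDerivAt (fun s : ℝ => Real.cos ((k : ℝ) * s)) 0 0 := by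
      exact ((Real.hasDerivAt_cos ((k:ℝ)*0)).comp 0 hks).congr_deriv (by simp)
    have hsin : HasDerivAt (fun s : ℝ => Real.sin ((k : ℝ) * s)) (k : ℝ) 0 := by
      exact ((Real.hasDerivAt_sin ((k:ℝ)*0)).comp 0 hks).congr_deriv (by simp)
    fin_cases i <;> simp only [rot3, Matrix.cons_val_zero, Matrix.cons_val_one, Matrix.head_cons,
      Matrix.cons_val_two, Matrix.tail_cons]
    · exact ((hcos.mul_const (u x 0)).sub (hsin.mul_const (u x 1))).congr_deriv (by simp)
    · exact ((hsin.mul_const (u x 0)).add (hcos.mul_const (u x 1))).congr_deriv (by simp)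
    · simpa using hasDerivAt_const (0:ℝ) (u x 2)
  have heq : (fun s : ℝ => u (rotPlane s x)) = fun s : ℝ => rot3 ((k : ℝ) * s) (u x) :=
    funext fun s => hequi s x
  rw [heq] at hL
  exact hL.unique hR

lemma orth_deriv (u : ℝ × ℝ → Fin 3 → ℝ) (hsm : ContDiff ℝ (⊤ : ℕ∞) u) (hsph : SphereValued u)
    (x : ℝ × ℝ) (v : ℝ × ℝ) : dot3 (u x) (fderiv ℝ u x v) = 0 := by
  have hd := (hsm.differentiable (by simp) x).hasFDerivAt
  have hline : HasDerivAt (fun t : ℝ => x + t • v) v 0 := by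
    simpa using ((hasDerivAt_id (0:ℝ)).smul_const v).const_add x
  have hx0 : x + (0:ℝ) • v = x := by simp
  have hw : HasDerivAt (fun t : ℝ => u (x + t • v)) (fderiv ℝ u x v) 0 := by
    have hd' : HasFDerivAt u (fderiv ℝ u x) (x + (0:ℝ) • v) := by rw [hx0]; exact hd
    exact hd'.comp_hasDerivAt (0 : ℝ) hline
  have hwi : ∀ i : Fin 3, HasDerivAt (fun t : ℝ => u (x + t • v) i) (fderiv ℝ u x v i) 0 :=
    fun i => hasDerivAt_pi.1 hw i
  set D := fderiv ℝ u x v with hD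
  have hg : HasDerivAt (fun t : ℝ => dot3 (u (x + t • v)) (u (x + t • v)))
      ((D 0 * u x 0 + u x 0 * D 0) + (D 1 * u x 1 + u x 1 * D 1)
        + (D 2 * u x 2 + u x 2 * D 2)) 0 := by
    have := (((hwi 0).mul (hwi 0)).add ((hwi 1).mul (hwi 1))).add ((hwi 2).mul (hwi 2))
    rw [hx0] at this
    exact this
  have hg' : HasDerivAt (fun _ : ℝ => (1:ℝ))
      ((D 0 * u x 0 + u x 0 * D 0) + (D 1 * u x 1 + u x 1 * D 1)
        + (D 2 * u x 2 + u x 2 * D 2)) 0 := by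
    have heq : (fun t : ℝ => dot3 (u (x + t • v)) (u (x + t • v))) = fun _ : ℝ => (1:ℝ) :=
      funext fun t => hsph _
    rwa [heq] at hg
  have := hg'.unique (hasDerivAt_const 0 1)
  simp only [dot3]
  linarith

lemma fderiv_lin (u : ℝ × ℝ → Fin 3 → ℝ) (x : ℝ × ℝ) (v : ℝ × ℝ)
    (i : Fin 3) : fderiv ℝ u x v i = v.1 * pd1 u x i + v.2 * pd2 u x i := by
  have hv : v = v.1 • ((1:ℝ), (0:ℝ)) + v.2 • ((0:ℝ), (1:ℝ)) := by
    simp [Prod.ext_iff]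
  rw [hv, map_add, (fderiv ℝ u x).map_smul, (fderiv ℝ u x).map_smul]
  simp [pd1, pd2]

lemma pointwise_id (k : ℤ) (u : ℝ × ℝ → Fin 3 → ℝ) (hsm : ContDiff ℝ (⊤ : ℕ∞) u)
    (hsph : SphereValued u) (hequi : IsEquivariant k u) (x : ℝ × ℝ) :
    (x.1 ^ 2 + x.2 ^ 2) * vort u x = -(k : ℝ) * fderiv ℝ u x (x.1, x.2) 2 := by
  have hE := equi_deriv k u hsm hequi x
  have E0 := congrFun hE 0
  have E1 := congrFun hE 1
  have E2 := congrFun hE 2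
  rw [fderiv_lin u x _ 0] at E0
  rw [fderiv_lin u x _ 1] at E1
  rw [fderiv_lin u x _ 2] at E2
  simp only [Matrix.cons_val_zero, Matrix.cons_val_one, Matrix.head_cons,
    Matrix.cons_val_two, Matrix.tail_cons, mul_zero, mul_neg] at E0 E1 E2
  have N := hsph x
  have O := orth_deriv u hsm hsph x (x.1, x.2)
  rw [show fderiv ℝ u x (x.1, x.2) = fun i => fderiv ℝ u x (x.1, x.2) i from rfl] at O
  simp only [dot3] at N O
  rw [fderiv_lin u x _ 0, fderiv_lin u x _ 1, fderiv_lin u x _ 2] at O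
  rw [fderiv_lin u x _ 2]
  simp only [vort, dot3, cross3, Matrix.cons_val_zero, Matrix.cons_val_one, Matrix.head_cons,
    Matrix.cons_val_two, Matrix.tail_cons]
  set u0 := u x 0; set u1 := u x 1; set u2 := u x 2
  set a0 := pd1 u x 0; set a1 := pd1 u x 1; set a2 := pd1 u x 2
  set b0 := pd2 u x 0; set b1 := pd2 u x 1; set b2 := pd2 u x 2
  simp only at O
  linear_combination (u1 * (x.1*a2 + x.2*b2) - u2 * (x.1*a1 + x.2*b1)) * E0
    + (u2 * (x.1*a0 + x.2*b0) - u0 * (x.1*a2 + x.2*b2)) * E1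
    + (u0 * (x.1*a1 + x.2*b1) - u1 * (x.1*a0 + x.2*b0)) * E2
    + ((k:ℝ) * u2) * O + (-(k:ℝ) * (x.1*a2 + x.2*b2)) * N

/-- Integrability transfer to polar coordinates. -/
lemma integrableOn_polar (f : ℝ × ℝ → ℝ) (hf : Integrable f) :
    IntegrableOn (fun p => p.1 • f (polarCoord.symm p)) polarCoord.target := by
  set B : ℝ × ℝ → ℝ × ℝ →L[ℝ] ℝ × ℝ := fun p =>
    LinearMap.toContinuousLinearMap (Matrix.toLin (Module.Basis.finTwoProd ℝ) (Module.Basis.finTwoProd ℝ)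
      !![cos p.2, -p.1 * sin p.2; sin p.2, p.1 * cos p.2]) with hB
  have B_det : ∀ p, (B p).det = p.1 := by
    intro p
    conv_rhs => rw [← one_mul p.1, ← cos_sq_add_sin_sq p.2]
    simp only [hB, neg_mul, LinearMap.det_toContinuousLinearMap, LinearMap.det_toLin,
      Matrix.det_fin_two_of, sub_neg_eq_add]
    ring
  have hder : ∀ p ∈ polarCoord.target,
      HasFDerivWithinAt polarCoord.symm (B p) polarCoord.target p :=
    fun p _ => (hasFDerivAt_polarCoord_symm p).hasFDerivWithinAt
  have hinj : Set.InjOn polarCoord.symm polarCoord.target := polarCoord.symm.injOn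
  have himg : polarCoord.symm '' polarCoord.target = polarCoord.source :=
    polarCoord.symm_image_target_eq_source
  have h1 : IntegrableOn f (polarCoord.symm '' polarCoord.target) := by
    rw [himg]; exact hf.integrableOn
  have h2 := (integrableOn_image_iff_integrableOn_abs_det_fderiv_smul volume
    polarCoord.open_target.measurableSet hder hinj f).1 h1
  refine h2.congr_fun (fun p hp => ?_) polarCoord.open_target.measurableSet
  beta_reduce
  rw [B_det, abs_of_pos hp.1]


/-- **Topological charge of a k-equivariant field.**
For a smooth k-equivariant `u : ℝ² → S²` with integrable vorticity and
`u₃ → a` at infinity, `Q(u) = (k/2)(u₃(0) - a)`. -/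
theorem charge_of_equivariant
    (k : ℤ) (u : ℝ × ℝ → Fin 3 → ℝ)
    (hsm : ContDiff ℝ (⊤ : ℕ∞) u) (hsph : SphereValued u) (hequi : IsEquivariant k u)
    (hint : Integrable (vort u))
    (a : ℝ) (ha : Tendsto (fun x : ℝ × ℝ => u x 2) (cocompact (ℝ × ℝ)) (nhds a)) :
    Qdeg u = (k : ℝ) / 2 * (u (0, 0) 2 - a) := by
  classical
  set G : ℝ × ℝ → ℝ := fun p =>
    -(k : ℝ) * (fderiv ℝ u (p.1 * Real.cos p.2, p.1 * Real.sin p.2)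
      (Real.cos p.2, Real.sin p.2) 2) with hG
  -- pointwise identity on the polar target
  have hEqOn : Set.EqOn (fun p => p.1 • vort u (polarCoord.symm p)) G polarCoord.target := by
    intro p hp
    have hp1 : (0:ℝ) < p.1 := hp.1
    have hsymm : polarCoord.symm p = (p.1 * Real.cos p.2, p.1 * Real.sin p.2) := rfl
    set x : ℝ × ℝ := (p.1 * Real.cos p.2, p.1 * Real.sin p.2) with hx
    have hpt := pointwise_id k u hsm hsph hequi x
    have hr2 : x.1 ^ 2 + x.2 ^ 2 = p.1 ^ 2 := by
      simp only [hx]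
      nlinarith [Real.sin_sq_add_cos_sq p.2]
    have hsmul : (x.1, x.2) = p.1 • ((Real.cos p.2 : ℝ), (Real.sin p.2 : ℝ)) := by
      simp [hx, Prod.ext_iff]
    have hlin : fderiv ℝ u x (x.1, x.2) 2
        = p.1 * fderiv ℝ u x (Real.cos p.2, Real.sin p.2) 2 := by
      rw [hsmul, (fderiv ℝ u x).map_smul]
      simp
    rw [hr2, hlin] at hpt
    have : p.1 * (p.1 * vort u x) = p.1 * G p := by
      rw [hG]
      simp only [hsymm]
      ring_nf
      ring_nf at hpt
      linarith [hpt]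
    have h2 := mul_left_cancel₀ (ne_of_gt hp1) this
    simp only [smul_eq_mul, hsymm]
    exact h2
  -- change of variables
  have hCV : (∫ p in polarCoord.target, p.1 • vort u (polarCoord.symm p)) = ∫ p, vort u p :=
    integral_comp_polarCoord_symm (vort u)
  have hIOn : IntegrableOn (fun p => p.1 • vort u (polarCoord.symm p)) polarCoord.target :=
    integrableOn_polar (vort u) hint
  have hGOn : IntegrableOn G polarCoord.target :=
    hIOn.congr_fun hEqOn polarCoord.open_target.measurableSet
  have hTG : (∫ p in polarCoord.target, p.1 • vort u (polarCoord.symm p))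
      = ∫ p in polarCoord.target, G p :=
    setIntegral_congr_fun polarCoord.open_target.measurableSet hEqOn
  -- Fubini on the target
  have htarget : polarCoord.target = Set.Ioi (0:ℝ) ×ˢ Set.Ioo (-Real.pi) Real.pi := rfl
  rw [htarget] at hGOn
  have hprodG : Integrable G ((volume.restrict (Set.Ioi (0:ℝ))).prod
      (volume.restrict (Set.Ioo (-Real.pi) Real.pi))) := by
    rwa [Measure.prod_restrict, ← Measure.volume_eq_prod]
  have hFub : (∫ p in Set.Ioi (0:ℝ) ×ˢ Set.Ioo (-Real.pi) Real.pi, G p)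
      = ∫ θ in Set.Ioo (-Real.pi) Real.pi, ∫ r in Set.Ioi (0:ℝ), G (r, θ) := by
    rw [Measure.volume_eq_prod, ← Measure.prod_restrict]
    exact integral_prod_symm G hprodG
  -- per-ray computation
  have hray : ∀ θ : ℝ, Integrable (fun r => G (r, θ)) (volume.restrict (Set.Ioi (0:ℝ))) →
      (∫ r in Set.Ioi (0:ℝ), G (r, θ)) = (k : ℝ) * (u (0, 0) 2 - a) := by
    intro θ hθ
    by_cases hk : (k : ℝ) = 0
    · simp [hG, hk]
    · set d : ℝ → ℝ := fun r =>
        fderiv ℝ u (r * Real.cos θ, r * Real.sin θ) (Real.cos θ, Real.sin θ) 2 with hd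
      have hdint : IntegrableOn d (Set.Ioi (0:ℝ)) := by
        have h1 : Integrable (fun r => (-(k:ℝ))⁻¹ * G (r, θ))
            (volume.restrict (Set.Ioi (0:ℝ))) := hθ.const_mul _
        have h2 : (fun r => (-(k:ℝ))⁻¹ * G (r, θ)) = d := by
          funext r
          simp only [hG, hd]
          field_simp
        rwa [h2] at h1
      have hderiv : ∀ r ∈ Set.Ici (0:ℝ),
          HasDerivAt (fun r => u (r * Real.cos θ, r * Real.sin θ) 2) (d r) r := by
        intro r _
        have hline : HasDerivAt (fun r : ℝ => ((r * Real.cos θ, r * Real.sin θ) : ℝ × ℝ))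
            (Real.cos θ, Real.sin θ) r := by
          simpa using HasDerivAt.prodMk ((hasDerivAt_id r).mul_const (Real.cos θ))
            ((hasDerivAt_id r).mul_const (Real.sin θ))
        have hcomp := ((hsm.differentiable (by simp) _).hasFDerivAt).comp_hasDerivAt r hline
        exact hasDerivAt_pi.1 hcomp 2
      have htends : Tendsto (fun r => u (r * Real.cos θ, r * Real.sin θ) 2) atTop (nhds a) := by
        apply ha.comp
        apply tendsto_cocompact_of_tendsto_dist_comp_atTop (0 : ℝ × ℝ)
        have hmax : (1:ℝ)/2 ≤ max |Real.cos θ| |Real.sin θ| := by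
          rcases le_total |Real.sin θ| |Real.cos θ| with h | h
          · rw [max_eq_left h]
            nlinarith [Real.sin_sq_add_cos_sq θ, sq_abs (Real.cos θ), sq_abs (Real.sin θ),
              abs_nonneg (Real.cos θ), abs_nonneg (Real.sin θ),
              mul_self_le_mul_self (abs_nonneg (Real.sin θ)) h]
          · rw [max_eq_right h]
            nlinarith [Real.sin_sq_add_cos_sq θ, sq_abs (Real.cos θ), sq_abs (Real.sin θ),
              abs_nonneg (Real.cos θ), abs_nonneg (Real.sin θ),
              mul_self_le_mul_self (abs_nonneg (Real.cos θ)) h]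
        apply tendsto_atTop_mono' atTop ?_ (tendsto_id.atTop_div_const two_pos)
        filter_upwards [eventually_ge_atTop (0:ℝ)] with r hr
        have : dist ((r * Real.cos θ, r * Real.sin θ) : ℝ × ℝ) 0
            = max |r * Real.cos θ| |r * Real.sin θ| := by
          rw [dist_zero_right, Prod.norm_def]
          simp only [Real.norm_eq_abs]
        rw [this]
        have habs : |r * Real.cos θ| ⊔ |r * Real.sin θ|
            = r * (|Real.cos θ| ⊔ |Real.sin θ|) := by
          rw [mul_max_of_nonneg _ _ hr, abs_mul, abs_mul, abs_of_nonneg hr]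

        rw [habs]
        calc r / 2 = r * (1/2) := by ring
          _ ≤ r * max |Real.cos θ| |Real.sin θ| := mul_le_mul_of_nonneg_left hmax hr
      have hFTC := integral_Ioi_of_hasDerivAt_of_tendsto'
        (f := fun r => u (r * Real.cos θ, r * Real.sin θ) 2) (f' := d) hderiv hdint htends
      norm_num at hFTC
      have hsm' : (∫ r in Set.Ioi (0:ℝ), G (r, θ)) = -(k:ℝ) • ∫ r in Set.Ioi (0:ℝ), d r := by
        rw [← integral_smul]
        rfl
      have h0 : ((0, 0) : ℝ × ℝ) = 0 := rfl
      rw [hsm', hFTC, h0, smul_eq_mul]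
      ring
  -- the inner integral is a.e. constant
  have hae : ∀ᵐ θ ∂(volume.restrict (Set.Ioo (-Real.pi) Real.pi)),
      (∫ r in Set.Ioi (0:ℝ), G (r, θ)) = (k : ℝ) * (u (0, 0) 2 - a) := by
    filter_upwards [hprodG.prod_left_ae] with θ hθ
    exact hray θ hθ
  have houter : (∫ θ in Set.Ioo (-Real.pi) Real.pi, ∫ r in Set.Ioi (0:ℝ), G (r, θ))
      = (2 * Real.pi) * ((k : ℝ) * (u (0, 0) 2 - a)) := by
    rw [integral_congr_ae hae, setIntegral_const]
    rw [Real.volume_real_Ioo_of_le (by linarith [Real.pi_pos] : -Real.pi ≤ Real.pi)]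
    rw [smul_eq_mul]
    ring
  have hvort : (∫ p, vort u p) = (2 * Real.pi) * ((k : ℝ) * (u (0, 0) 2 - a)) := by
    rw [← hCV, hTG, htarget, hFub, houter]
  rw [Qdeg, hvort]
  have hpi := Real.pi_ne_zero
  field_simp
  ring
end
end

section
/- Let k ∈ ℤ∖{0} and let u : ℝ² → S² be a smooth k-equivariant map such that ω(u) is integrable on ℝ² and the limit a = lim_{|x|→∞} u₃(x) exists; set the polarity p(u) = (u₃(0) + a)/2. Then J₁(u) = J₂(u) = 0 and J₃(u) = (1−k) S₃(u) + 4π k p(u). -/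
open MeasureTheory Filter

noncomputable section

section polar
open Set Real

theorem integrableOn_comp_polarCoord_symm {E : Type*} [NormedAddCommGroup E] [NormedSpace ℝ E]
    {f : ℝ × ℝ → E} (hf : Integrable f) :
    IntegrableOn (fun p => p.1 • f (polarCoord.symm p)) polarCoord.target := by
  set B : ℝ × ℝ → ℝ × ℝ →L[ℝ] ℝ × ℝ := fun p =>
    LinearMap.toContinuousLinearMap (Matrix.toLin (Module.Basis.finTwoProd ℝ) (Module.Basis.finTwoProd ℝ)
      !![Real.cos p.2, -p.1 * Real.sin p.2; Real.sin p.2, p.1 * Real.cos p.2])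
  have A : ∀ p ∈ polarCoord.target, HasFDerivWithinAt polarCoord.symm (B p) polarCoord.target p :=
    fun p _ => (hasFDerivAt_polarCoord_symm p).hasFDerivWithinAt
  have B_det : ∀ p, (B p).det = p.1 := by
    intro p
    conv_rhs => rw [← one_mul p.1, ← cos_sq_add_sin_sq p.2]
    simp only [B, neg_mul, LinearMap.det_toContinuousLinearMap, LinearMap.det_toLin,
      Matrix.det_fin_two_of, sub_neg_eq_add]
    ring
  have hinj : InjOn polarCoord.symm polarCoord.target := polarCoord.symm.injOn
  have himg : polarCoord.symm '' polarCoord.target = polarCoord.source :=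
    polarCoord.symm_image_target_eq_source
  have key := (integrableOn_image_iff_integrableOn_abs_det_fderiv_smul volume
    polarCoord.open_target.measurableSet A hinj f)
  rw [himg] at key
  have hsrc : IntegrableOn f polarCoord.source := hf.integrableOn
  rw [key] at hsrc
  refine hsrc.congr_fun (fun p hp => ?_) polarCoord.open_target.measurableSet
  beta_reduce
  rw [B_det, abs_of_pos hp.1]


theorem integral_Ioo_cos_km (k : ℤ) (hk : k ≠ 0) :
    (∫ θ in Ioo (-π) π, Real.cos ((k : ℝ) * θ)) = 0 := by
  have hpi : -π ≤ π := by linarith [Real.pi_pos]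
  rw [← integral_Ioc_eq_integral_Ioo, ← intervalIntegral.integral_of_le hpi]
  have hk' : (k : ℝ) ≠ 0 := Int.cast_ne_zero.mpr hk
  rw [intervalIntegral.integral_comp_mul_left (fun x => Real.cos x) hk',
    integral_cos]
  have h1 : Real.sin ((k:ℝ) * π) = 0 := Real.sin_int_mul_pi k
  have h2 : Real.sin ((k:ℝ) * (-π)) = 0 := by
    rw [mul_neg, Real.sin_neg, h1, neg_zero]
  rw [h1, h2]
  simp

theorem integral_Ioo_sin_km (k : ℤ) (hk : k ≠ 0) :
    (∫ θ in Ioo (-π) π, Real.sin ((k : ℝ) * θ)) = 0 := by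
  have hpi : -π ≤ π := by linarith [Real.pi_pos]
  rw [← integral_Ioc_eq_integral_Ioo, ← intervalIntegral.integral_of_le hpi]
  have hk' : (k : ℝ) ≠ 0 := Int.cast_ne_zero.mpr hk
  rw [intervalIntegral.integral_comp_mul_left (fun x => Real.sin x) hk',
    integral_sin]
  have : Real.cos ((k:ℝ) * (-π)) = Real.cos ((k:ℝ) * π) := by
    rw [mul_neg, Real.cos_neg]
  rw [this]
  simp

theorem integral_Ioo_one : (∫ _ in Ioo (-π) π, (1:ℝ)) = 2 * π := by
  simp only [integral_const, Measure.restrict_apply, MeasurableSet.univ, univ_inter, smul_eq_mul,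
    mul_one, Real.volume_Ioo]
  rw [measureReal_restrict_apply_univ, Real.volume_real_Ioo, max_eq_left (by linarith [Real.pi_pos])]
  ring

end polar

section calc1
variable {k : ℤ} {u : ℝ × ℝ → Fin 3 → ℝ}

/-- derivative of u along a straight line -/
lemma line_hasDerivAt (hd : Differentiable ℝ u) (x h : ℝ × ℝ) :
    HasDerivAt (fun t : ℝ => u (x.1 + t * h.1, x.2 + t * h.2)) (fderiv ℝ u x h) 0 := by
  have hc : HasDerivAt (fun t : ℝ => ((x.1 + t * h.1, x.2 + t * h.2) : ℝ × ℝ)) h 0 := by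
    have h1 : HasDerivAt (fun t : ℝ => x.1 + t * h.1) h.1 0 := by
      simpa using ((hasDerivAt_id (0:ℝ)).mul_const h.1).const_add x.1
    have h2 : HasDerivAt (fun t : ℝ => x.2 + t * h.2) h.2 0 := by
      simpa using ((hasDerivAt_id (0:ℝ)).mul_const h.2).const_add x.2
    exact h1.prodMk h2
  have hx : ((x.1 + (0:ℝ) * h.1, x.2 + (0:ℝ) * h.2) : ℝ × ℝ) = x := by simp
  have hu : HasFDerivAt u (fderiv ℝ u x) ((x.1 + (0:ℝ) * h.1, x.2 + (0:ℝ) * h.2) : ℝ × ℝ) := by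
    rw [hx]; exact (hd x).hasFDerivAt
  exact hu.comp_hasDerivAt 0 hc

/-- orthogonality u · ∂u = 0 -/
lemma orth (hd : Differentiable ℝ u) (hsph : SphereValued u) (x : ℝ × ℝ) (h : ℝ × ℝ) :
    dot3 (u x) (fderiv ℝ u x h) = 0 := by
  set c : ℝ → ℝ × ℝ := fun t => (x.1 + t * h.1, x.2 + t * h.2) with hc
  have hline := line_hasDerivAt hd x h
  have hcomp : ∀ i, HasDerivAt (fun t => u (c t) i) (fderiv ℝ u x h i) 0 :=
    fun i => (hasDerivAt_pi.1 hline) i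
  have hsum : HasDerivAt (fun t => u (c t) 0 * u (c t) 0 + u (c t) 1 * u (c t) 1
      + u (c t) 2 * u (c t) 2)
      (2 * (u x 0 * fderiv ℝ u x h 0 + u x 1 * fderiv ℝ u x h 1 + u x 2 * fderiv ℝ u x h 2)) 0 := by
    have h0 := (hcomp 0).mul (hcomp 0)
    have h1 := (hcomp 1).mul (hcomp 1)
    have h2 := (hcomp 2).mul (hcomp 2)
    have hx0 : c 0 = x := by simp [hc]
    have := (h0.add h1).add h2
    rw [hx0] at this
    refine this.congr_deriv ?_
    ring
  have hconst : (fun t => u (c t) 0 * u (c t) 0 + u (c t) 1 * u (c t) 1 + u (c t) 2 * u (c t) 2)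
      = fun _ => (1:ℝ) := by
    funext t; exact hsph (c t)
  have hzero : HasDerivAt (fun t => u (c t) 0 * u (c t) 0 + u (c t) 1 * u (c t) 1
      + u (c t) 2 * u (c t) 2) 0 0 := by
    rw [hconst]; exact hasDerivAt_const 0 1
  have := hsum.unique hzero
  simp only [dot3]
  linarith

/-- angular derivative from equivariance -/
lemma ang_deriv (hd : Differentiable ℝ u) (hequi : IsEquivariant k u) (x : ℝ × ℝ) :
    fderiv ℝ u x (-x.2, x.1) = fun i => (k:ℝ) * ![-(u x 1), u x 0, 0] i := by
  have hc : HasDerivAt (fun θ : ℝ => rotPlane θ x) (-x.2, x.1) 0 := by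
    have h1 : HasDerivAt (fun θ : ℝ => Real.cos θ * x.1 - Real.sin θ * x.2) (-x.2) 0 := by
      have := ((Real.hasDerivAt_cos 0).mul_const x.1).sub ((Real.hasDerivAt_sin 0).mul_const x.2)
      refine this.congr_deriv ?_
      simp
    have h2 : HasDerivAt (fun θ : ℝ => Real.sin θ * x.1 + Real.cos θ * x.2) x.1 0 := by
      have := ((Real.hasDerivAt_sin 0).mul_const x.1).add ((Real.hasDerivAt_cos 0).mul_const x.2)
      refine this.congr_deriv ?_
      simp
    exact h1.prodMk h2
  have hx : rotPlane 0 x = x := by simp [rotPlane]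
  have hu : HasFDerivAt u (fderiv ℝ u x) (rotPlane 0 x) := by rw [hx]; exact (hd x).hasFDerivAt
  have hcomp : HasDerivAt (fun θ => u (rotPlane θ x)) (fderiv ℝ u x (-x.2, x.1)) 0 :=
    hu.comp_hasDerivAt 0 hc
  have hfun : (fun θ => u (rotPlane θ x)) = fun θ => rot3 ((k:ℝ) * θ) (u x) :=
    funext fun θ => hequi θ x
  rw [hfun] at hcomp
  have hkθ : HasDerivAt (fun θ : ℝ => (k:ℝ) * θ) (k:ℝ) 0 := by
    simpa using (hasDerivAt_id (0:ℝ)).const_mul (k:ℝ)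
  have hrot : HasDerivAt (fun θ : ℝ => rot3 ((k:ℝ) * θ) (u x))
      (fun i => (k:ℝ) * ![-(u x 1), u x 0, 0] i) 0 := by
    rw [hasDerivAt_pi]
    intro i
    fin_cases i
    · show HasDerivAt (fun θ : ℝ => Real.cos ((k:ℝ)*θ) * u x 0 - Real.sin ((k:ℝ)*θ) * u x 1) _ 0
      have hcos : HasDerivAt (fun θ : ℝ => Real.cos ((k:ℝ)*θ)) (-Real.sin ((k:ℝ)*0) * (k:ℝ)) 0 :=
        (Real.hasDerivAt_cos ((k:ℝ)*0)).comp 0 hkθ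
      have hsin : HasDerivAt (fun θ : ℝ => Real.sin ((k:ℝ)*θ)) (Real.cos ((k:ℝ)*0) * (k:ℝ)) 0 :=
        (Real.hasDerivAt_sin ((k:ℝ)*0)).comp 0 hkθ
      have := (hcos.mul_const (u x 0)).sub (hsin.mul_const (u x 1))
      simp only [mul_zero, Real.sin_zero, Real.cos_zero, neg_zero, zero_mul, one_mul] at this
      refine this.congr_deriv ?_
      simp
    · show HasDerivAt (fun θ : ℝ => Real.sin ((k:ℝ)*θ) * u x 0 + Real.cos ((k:ℝ)*θ) * u x 1) _ 0
      have hcos : HasDerivAt (fun θ : ℝ => Real.cos ((k:ℝ)*θ)) (-Real.sin ((k:ℝ)*0) * (k:ℝ)) 0 :=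
        (Real.hasDerivAt_cos ((k:ℝ)*0)).comp 0 hkθ
      have hsin : HasDerivAt (fun θ : ℝ => Real.sin ((k:ℝ)*θ)) (Real.cos ((k:ℝ)*0) * (k:ℝ)) 0 :=
        (Real.hasDerivAt_sin ((k:ℝ)*0)).comp 0 hkθ
      have := (hsin.mul_const (u x 0)).add (hcos.mul_const (u x 1))
      simp only [mul_zero, Real.sin_zero, Real.cos_zero, neg_zero, zero_mul, one_mul] at this
      refine this.congr_deriv ?_
      simp
    · show HasDerivAt (fun _ : ℝ => u x 2) _ 0
      refine (hasDerivAt_const (0:ℝ) (u x 2)).congr_deriv ?_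
      simp
  exact hcomp.unique hrot

/-- linear decomposition of fderiv in the angular direction -/
lemma ang_decomp (x : ℝ × ℝ) (i : Fin 3) :
    fderiv ℝ u x (-x.2, x.1) i = -x.2 * pd1 u x i + x.2 * 0 + x.1 * pd2 u x i := by
  have : ((-x.2, x.1) : ℝ × ℝ) = (-x.2) • ((1:ℝ), (0:ℝ)) + x.1 • ((0:ℝ),(1:ℝ)) := by
    simp [Prod.ext_iff]
  rw [this, map_add, (fderiv ℝ u x).map_smul, (fderiv ℝ u x).map_smul]
  simp only [Pi.add_apply, Pi.smul_apply, smul_eq_mul, pd1, pd2]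
  ring

theorem vort_alg (k x1 x2 a0 a1 a2 b0 b1 b2 v0 v1 v2 : ℝ)
    (he0 : -x2*a0 + x1*b0 = -(k*v1))
    (he1 : -x2*a1 + x1*b1 = k*v0)
    (he2 : -x2*a2 + x1*b2 = 0)
    (ho1 : v0*a0+v1*a1+v2*a2 = 0)
    (ho2 : v0*b0+v1*b1+v2*b2 = 0)
    (hn : v0*v0+v1*v1+v2*v2 = 1) :
    (x1^2+x2^2) * (v0*(a1*b2-a2*b1)+v1*(a2*b0-a0*b2)+v2*(a0*b1-a1*b0))
      = -(k*(x1*a2+x2*b2)) := by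
  linear_combination (v1*(x1*a2+x2*b2) - v2*(x1*a1+x2*b1)) * he0
    + (v2*(x1*a0+x2*b0) - v0*(x1*a2+x2*b2)) * he1
    + (v0*(x1*a1+x2*b1) - v1*(x1*a0+x2*b0)) * he2
    + k*v2*x1 * ho1 + k*v2*x2 * ho2 - k*(x1*a2+x2*b2) * hn

/-- vorticity formula -/
lemma vort_formula (hd : Differentiable ℝ u) (hsph : SphereValued u)
    (hequi : IsEquivariant k u) (x : ℝ × ℝ) :
    (x.1^2 + x.2^2) * vort u x = -((k:ℝ) * (x.1 * pd1 u x 2 + x.2 * pd2 u x 2)) := by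
  have hang := ang_deriv hd hequi x
  have he : ∀ i : Fin 3, -x.2 * pd1 u x i + x.1 * pd2 u x i = (k:ℝ) * ![-(u x 1), u x 0, 0] i := by
    intro i
    have h1 := ang_decomp (u := u) x i
    have h2 : fderiv ℝ u x (-x.2, x.1) i = (k:ℝ) * ![-(u x 1), u x 0, 0] i := by rw [hang]
    linarith [h1, h2]
  have he0 := he 0; have he1 := he 1; have he2 := he 2
  simp only [Matrix.cons_val_zero, Matrix.cons_val_one, Matrix.head_cons,
    Matrix.cons_val_two, Matrix.tail_cons] at he0 he1 he2
  have ho1 := orth hd hsph x (1,0)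
  have ho2 := orth hd hsph x (0,1)
  have hn := hsph x
  simp only [dot3] at ho1 ho2 hn
  simp only [vort, dot3, cross3, Matrix.cons_val_zero, Matrix.cons_val_one, Matrix.head_cons,
    Matrix.cons_val_two, Matrix.tail_cons]
  exact vort_alg (k:ℝ) x.1 x.2 _ _ _ _ _ _ _ _ _ (by linarith) (by linarith) (by linarith)
    ho1 ho2 hn

end calc1

section calc2
variable {k : ℤ} {u : ℝ × ℝ → Fin 3 → ℝ}

lemma base_hasDerivAt (hd : Differentiable ℝ u) (r : ℝ) (i : Fin 3) :
    HasDerivAt (fun s : ℝ => u (s, 0) i) (pd1 u (r, 0) i) r := by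
  have hc : HasDerivAt (fun s : ℝ => ((s, 0) : ℝ × ℝ)) ((1,0) : ℝ × ℝ) r :=
    (hasDerivAt_id r).prodMk (hasDerivAt_const r 0)
  have := ((hd (r,0)).hasFDerivAt.comp_hasDerivAt r hc)
  exact (hasDerivAt_pi.1 this) i

lemma slant_hasDerivAt (hd : Differentiable ℝ u) (θ r : ℝ) (i : Fin 3) :
    HasDerivAt (fun s : ℝ => u (s * Real.cos θ, s * Real.sin θ) i)
      (Real.cos θ * pd1 u (r * Real.cos θ, r * Real.sin θ) i
        + Real.sin θ * pd2 u (r * Real.cos θ, r * Real.sin θ) i) r := by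
  have hc : HasDerivAt (fun s : ℝ => ((s * Real.cos θ, s * Real.sin θ) : ℝ × ℝ))
      ((Real.cos θ, Real.sin θ) : ℝ × ℝ) r := by
    have := ((hasDerivAt_id r).mul_const (Real.cos θ)).prodMk ((hasDerivAt_id r).mul_const (Real.sin θ))
    simpa using this
  have h := ((hd _).hasFDerivAt.comp_hasDerivAt r hc)
  have hi := (hasDerivAt_pi.1 h) i
  have hdecomp : fderiv ℝ u (r * Real.cos θ, r * Real.sin θ) (Real.cos θ, Real.sin θ) i
      = Real.cos θ * pd1 u (r * Real.cos θ, r * Real.sin θ) i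
        + Real.sin θ * pd2 u (r * Real.cos θ, r * Real.sin θ) i := by
    have hsplit : ((Real.cos θ, Real.sin θ) : ℝ × ℝ)
        = Real.cos θ • ((1:ℝ), (0:ℝ)) + Real.sin θ • ((0:ℝ),(1:ℝ)) := by simp [Prod.ext_iff]
    rw [hsplit, map_add, (fderiv ℝ u _).map_smul, (fderiv ℝ u _).map_smul]
    simp only [Pi.add_apply, Pi.smul_apply, smul_eq_mul, pd1, pd2]
  rw [hdecomp] at hi
  exact hi

lemma rotPlane_base (θ s : ℝ) : rotPlane θ (s, 0) = (s * Real.cos θ, s * Real.sin θ) := by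
  simp only [rotPlane, Prod.mk.injEq]
  constructor <;> ring

lemma slant_eq2 (hequi : IsEquivariant k u) (θ s : ℝ) :
    u (s * Real.cos θ, s * Real.sin θ) 2 = u (s, 0) 2 := by
  have h := hequi θ (s, 0)
  rw [rotPlane_base] at h
  rw [h]
  simp [rot3]

lemma slant_deriv_eq (hd : Differentiable ℝ u) (hequi : IsEquivariant k u) (θ r : ℝ) :
    Real.cos θ * pd1 u (r * Real.cos θ, r * Real.sin θ) 2
      + Real.sin θ * pd2 u (r * Real.cos θ, r * Real.sin θ) 2 = pd1 u (r, 0) 2 := by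
  have h1 := slant_hasDerivAt hd θ r 2
  have h2 : HasDerivAt (fun s : ℝ => u (s * Real.cos θ, s * Real.sin θ) 2) (pd1 u (r,0) 2) r := by
    have : (fun s : ℝ => u (s * Real.cos θ, s * Real.sin θ) 2) = fun s : ℝ => u (s, 0) 2 :=
      funext fun s => slant_eq2 hequi θ s
    rw [this]
    exact base_hasDerivAt hd r 2
  exact h1.unique h2

lemma vort_polar (hd : Differentiable ℝ u) (hsph : SphereValued u)
    (hequi : IsEquivariant k u) (p : ℝ × ℝ) (hp : 0 < p.1) :
    p.1 * vort u (p.1 * Real.cos p.2, p.1 * Real.sin p.2) = -((k:ℝ) * pd1 u (p.1, (0:ℝ)) 2) := by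
  have hv := vort_formula hd hsph hequi (p.1 * Real.cos p.2, p.1 * Real.sin p.2)
  have hsq : (p.1 * Real.cos p.2)^2 + (p.1 * Real.sin p.2)^2 = p.1^2 := by
    linear_combination p.1^2 * (Real.sin_sq_add_cos_sq p.2)
  have hsd := slant_deriv_eq hd hequi p.2 p.1
  apply mul_left_cancel₀ (ne_of_gt hp)
  calc p.1 * (p.1 * vort u (p.1 * Real.cos p.2, p.1 * Real.sin p.2))
      = ((p.1 * Real.cos p.2)^2 + (p.1 * Real.sin p.2)^2)
          * vort u (p.1 * Real.cos p.2, p.1 * Real.sin p.2) := by rw [hsq]; ring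
    _ = -((k:ℝ) * ((p.1 * Real.cos p.2) * pd1 u (p.1 * Real.cos p.2, p.1 * Real.sin p.2) 2
          + (p.1 * Real.sin p.2) * pd2 u (p.1 * Real.cos p.2, p.1 * Real.sin p.2) 2)) := hv
    _ = -((k:ℝ) * (p.1 * (Real.cos p.2 * pd1 u (p.1 * Real.cos p.2, p.1 * Real.sin p.2) 2
          + Real.sin p.2 * pd2 u (p.1 * Real.cos p.2, p.1 * Real.sin p.2) 2))) := by ring
    _ = p.1 * -((k:ℝ) * pd1 u (p.1, (0:ℝ)) 2) := by rw [hsd]; ring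

lemma u_polar (hequi : IsEquivariant k u) (p : ℝ × ℝ) :
    u (p.1 * Real.cos p.2, p.1 * Real.sin p.2) = rot3 ((k:ℝ) * p.2) (u (p.1, 0)) := by
  rw [← rotPlane_base]
  exact hequi p.2 (p.1, 0)

lemma lam_polar (p : ℝ × ℝ) :
    lam (p.1 * Real.cos p.2, p.1 * Real.sin p.2) = lam (p.1, (0:ℝ)) := by
  simp only [lam]
  congr 1
  linear_combination p.1^2 * (Real.sin_sq_add_cos_sq p.2)

end calc2

section integ
open Set
variable {k : ℤ} {u : ℝ × ℝ → Fin 3 → ℝ}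

lemma lam_pos (x : ℝ × ℝ) : 0 < 1 + x.1 ^ 2 + x.2 ^ 2 := by positivity

lemma continuous_lam : Continuous lam := by
  apply continuous_const.div
  · fun_prop
  · exact fun x => ne_of_gt (lam_pos x)

lemma integrable_lam_sq : Integrable (fun x : ℝ × ℝ => lam x ^ 2) := by
  have hint : Integrable (fun x : ℝ × ℝ => (1 + ‖x‖) ^ (-(3:ℝ))) := by
    apply integrable_one_add_norm (E := ℝ × ℝ)
    simp
    norm_num
  refine (hint.const_mul 16).mono' ((continuous_lam.pow 2).aestronglyMeasurable) ?_
  refine Filter.Eventually.of_forall (fun x => ?_)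
  set m := ‖x‖ with hm
  have hm0 : (0:ℝ) ≤ m := norm_nonneg x
  have hq : m^2 ≤ x.1^2 + x.2^2 := by
    have h1 : m = max |x.1| |x.2| := by rw [hm, Prod.norm_def, Real.norm_eq_abs, Real.norm_eq_abs]
    rcases max_cases |x.1| |x.2| with ⟨h, _⟩ | ⟨h, _⟩ <;> rw [h1, h, sq_abs] <;>
      nlinarith [sq_nonneg x.1, sq_nonneg x.2]
  have hrpow : (1 + m) ^ (-(3:ℝ)) = ((1 + m)^(3:ℕ))⁻¹ := by
    rw [← Real.rpow_natCast (1 + m) 3, ← Real.rpow_neg (by linarith)]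
    norm_num
  rw [Real.norm_eq_abs, abs_of_nonneg (sq_nonneg _), hrpow, lam, div_pow]
  have hpos : (0:ℝ) < 1 + x.1^2 + x.2^2 := lam_pos x
  have hposm : (0:ℝ) < (1 + m)^(3:ℕ) := by positivity
  rw [show (16:ℝ) * ((1+m)^(3:ℕ))⁻¹ = 16 / (1+m)^(3:ℕ) by ring,
    div_le_div_iff₀ (by positivity) hposm]
  have e1 : (1+m)^2 ≤ 2*(1 + x.1^2 + x.2^2) := by nlinarith [sq_nonneg (1-m)]
  have e2 : (1+m)^3 ≤ (1+m)^4 := by nlinarith [pow_nonneg (by linarith : (0:ℝ) ≤ 1+m) 3]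
  have e3 : (1+m)^4 ≤ 4*(1 + x.1^2 + x.2^2)^2 := by nlinarith [sq_nonneg ((1+m)^2), sq_nonneg (1 + x.1^2+x.2^2)]
  calc (2:ℝ)^2 * (1+m)^(3:ℕ) = 4 * (1+m)^3 := by norm_num
    _ ≤ 4 * (4*(1 + x.1^2 + x.2^2)^2) := by nlinarith
    _ = 16 * (1 + x.1^2 + x.2^2)^2 := by ring

lemma u_comp_bound (hsph : SphereValued u) (x : ℝ × ℝ) (i : Fin 3) : |u x i| ≤ 1 := by
  have h := hsph x
  simp only [dot3] at h
  fin_cases i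
  · show |u x 0| ≤ 1
    exact abs_le.2 ⟨by nlinarith [sq_nonneg (u x 1), sq_nonneg (u x 2)],
      by nlinarith [sq_nonneg (u x 1), sq_nonneg (u x 2)]⟩
  · show |u x 1| ≤ 1
    exact abs_le.2 ⟨by nlinarith [sq_nonneg (u x 0), sq_nonneg (u x 2)],
      by nlinarith [sq_nonneg (u x 0), sq_nonneg (u x 2)]⟩
  · show |u x 2| ≤ 1
    exact abs_le.2 ⟨by nlinarith [sq_nonneg (u x 0), sq_nonneg (u x 1)],
      by nlinarith [sq_nonneg (u x 0), sq_nonneg (u x 1)]⟩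

lemma Phi_comp_bound (x : ℝ × ℝ) (i : Fin 3) : |Phi x i| ≤ 1 := by
  have hpos : (0:ℝ) < 1 + x.1^2 + x.2^2 := lam_pos x
  have key : ∀ t : ℝ, |2*t| ≤ 1 + x.1^2 + x.2^2 → |lam x * t| ≤ 1 := by
    intro t ht
    rw [lam, div_mul_eq_mul_div, abs_div, abs_of_pos hpos, div_le_one hpos]
    exact ht
  fin_cases i
  · show |lam x * x.1| ≤ 1
    apply key
    rcases abs_cases (2*x.1) with ⟨h,_⟩|⟨h,_⟩ <;> rw [h] <;>
      nlinarith [sq_nonneg (x.1-1), sq_nonneg (x.1+1), sq_nonneg x.2]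
  · show |lam x * x.2| ≤ 1
    apply key
    rcases abs_cases (2*x.2) with ⟨h,_⟩|⟨h,_⟩ <;> rw [h] <;>
      nlinarith [sq_nonneg (x.2-1), sq_nonneg (x.2+1), sq_nonneg x.1]
  · show |lam x * ((1 - (x.1^2 + x.2^2))/2)| ≤ 1
    apply key
    rcases abs_cases (2*((1 - (x.1^2 + x.2^2))/2)) with ⟨h,_⟩|⟨h,_⟩ <;> rw [h] <;>
      nlinarith [sq_nonneg x.1, sq_nonneg x.2]

lemma integrable_spin (hsm : ContDiff ℝ (⊤ : ℕ∞) u) (hsph : SphereValued u) :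
    Integrable (fun x : ℝ × ℝ => lam x ^ 2 • u x) := by
  refine integrable_lam_sq.mono' ?_ ?_
  · exact ((continuous_lam.pow 2).smul hsm.continuous).aestronglyMeasurable
  · refine Filter.Eventually.of_forall (fun x => ?_)
    refine (pi_norm_le_iff_of_nonneg (sq_nonneg _)).2 (fun i => ?_)
    rw [Pi.smul_apply, smul_eq_mul, Real.norm_eq_abs, abs_mul, abs_of_nonneg (sq_nonneg _)]
    nlinarith [u_comp_bound hsph x i, abs_nonneg (u x i), sq_nonneg (lam x)]

lemma continuous_pd1 (hsm : ContDiff ℝ (⊤ : ℕ∞) u) : Continuous (pd1 u) :=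
  (hsm.continuous_fderiv (by simp)).clm_apply continuous_const

lemma continuous_pd2 (hsm : ContDiff ℝ (⊤ : ℕ∞) u) : Continuous (pd2 u) :=
  (hsm.continuous_fderiv (by simp)).clm_apply continuous_const

lemma continuous_vort (hsm : ContDiff ℝ (⊤ : ℕ∞) u) : Continuous (vort u) := by
  have h0 : ∀ i, Continuous fun x => u x i := fun i => (continuous_apply i).comp hsm.continuous
  have hA : ∀ i, Continuous fun x => pd1 u x i :=
    fun i => (continuous_apply i).comp (continuous_pd1 hsm)
  have hB : ∀ i, Continuous fun x => pd2 u x i :=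
    fun i => (continuous_apply i).comp (continuous_pd2 hsm)
  show Continuous fun x => dot3 (u x) (cross3 (pd1 u x) (pd2 u x))
  simp only [dot3, cross3, Matrix.cons_val_zero, Matrix.cons_val_one, Matrix.head_cons,
    Matrix.cons_val_two, Matrix.tail_cons]
  exact (((h0 0).mul (((hA 1).mul (hB 2)).sub ((hA 2).mul (hB 1)))).add
    ((h0 1).mul (((hA 2).mul (hB 0)).sub ((hA 0).mul (hB 2))))).add
    ((h0 2).mul (((hA 0).mul (hB 1)).sub ((hA 1).mul (hB 0))))

lemma continuous_Phi : Continuous Phi := by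
  refine continuous_pi (fun i => ?_)
  fin_cases i
  · show Continuous fun x : ℝ × ℝ => lam x * x.1
    exact continuous_lam.mul continuous_fst
  · show Continuous fun x : ℝ × ℝ => lam x * x.2
    exact continuous_lam.mul continuous_snd
  · show Continuous fun x : ℝ × ℝ => lam x * ((1 - (x.1^2 + x.2^2))/2)
    exact continuous_lam.mul (by fun_prop)

lemma integrable_orb (hsm : ContDiff ℝ (⊤ : ℕ∞) u) (hint : Integrable (vort u)) :
    Integrable (fun x : ℝ × ℝ => vort u x • Phi x) := by
  refine hint.abs.mono' ?_ ?_
  · exact ((continuous_vort hsm).smul continuous_Phi).aestronglyMeasurable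
  · refine Filter.Eventually.of_forall (fun x => ?_)
    refine (pi_norm_le_iff_of_nonneg (abs_nonneg _)).2 (fun i => ?_)
    rw [Pi.smul_apply, smul_eq_mul, Real.norm_eq_abs, abs_mul]
    nlinarith [Phi_comp_bound x i, abs_nonneg (vort u x), abs_nonneg (Phi x i)]

end integ

section oned
open Set
variable {k : ℤ} {u : ℝ × ℝ → Fin 3 → ℝ}

lemma lam_base (r : ℝ) : lam (r, (0:ℝ)) = 2/(1+r^2) := by
  simp [lam]

lemma phi3_base (r : ℝ) : Phi (r, (0:ℝ)) 2 = (1-r^2)/(1+r^2) := by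
  show lam (r,0) * ((1 - (r^2 + 0^2))/2) = _
  rw [lam_base]
  have h : (0:ℝ) < 1+r^2 := by positivity
  field_simp
  ring

lemma integrable_rlam : IntegrableOn (fun r : ℝ => r * lam (r, (0:ℝ))^2) (Ioi 0) := by
  have hD : ∀ r : ℝ, HasDerivAt (fun s : ℝ => -2/(1+s^2)) (r * lam (r,(0:ℝ))^2) r := by
    intro r
    have h1 : HasDerivAt (fun s : ℝ => 1+s^2) (2*r) r := by
      simpa using ((hasDerivAt_pow 2 r).const_add 1)
    have h2 := (hasDerivAt_const r (-2:ℝ)).div h1 (by positivity)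
    refine h2.congr_deriv ?_
    rw [lam_base]
    have h : (0:ℝ) < 1+r^2 := by positivity
    field_simp
    ring
  have hcontg : Continuous (fun s : ℝ => -2/(1+s^2)) := by
    apply continuous_const.div (by fun_prop)
    intro x; positivity
  refine integrableOn_Ioi_deriv_of_nonneg (l := 0) hcontg.continuousWithinAt
    (fun x _ => hD x) ?_ ?_
  · intro x hx
    have : (0:ℝ) < x := hx
    positivity
  · have h1 : Filter.Tendsto (fun s:ℝ => 1+s^2) Filter.atTop Filter.atTop :=
      Filter.tendsto_atTop_add_const_left _ 1 (tendsto_pow_atTop two_ne_zero)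
    simpa using tendsto_const_nhds.div_atTop h1

lemma hasDerivAt_phi3 (r : ℝ) :
    HasDerivAt (fun s : ℝ => Phi (s,(0:ℝ)) 2) (-(r * lam (r,(0:ℝ))^2)) r := by
  have heq : (fun s : ℝ => Phi (s,(0:ℝ)) 2) = fun s => (1-s^2)/(1+s^2) := funext phi3_base
  rw [heq]
  have h1 : HasDerivAt (fun s : ℝ => 1-s^2) (-(2*r)) r := by
    simpa using ((hasDerivAt_pow 2 r).const_sub 1)
  have h2 : HasDerivAt (fun s : ℝ => 1+s^2) (2*r) r := by
    simpa using ((hasDerivAt_pow 2 r).const_add 1)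
  have h3 := h1.div h2 (by positivity)
  refine h3.congr_deriv ?_
  rw [lam_base]
  have h : (0:ℝ) < 1+r^2 := by positivity
  field_simp
  ring

lemma tendsto_base_cocompact :
    Filter.Tendsto (fun r : ℝ => ((r, 0) : ℝ × ℝ)) Filter.atTop (Filter.cocompact (ℝ × ℝ)) := by
  rw [Filter.hasBasis_cocompact.tendsto_right_iff]
  intro K hK
  obtain ⟨R, hR⟩ := hK.isBounded.subset_closedBall 0
  filter_upwards [Filter.eventually_gt_atTop R] with r hr
  intro hmem
  have h2 := Metric.mem_closedBall.1 (hR hmem)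
  rw [Prod.dist_eq] at h2
  have h3 : dist r 0 ≤ R := le_trans (le_max_left _ _) h2
  rw [Real.dist_eq, sub_zero] at h3
  linarith [le_abs_self r]

lemma tendsto_phi3 : Filter.Tendsto (fun r : ℝ => Phi (r,(0:ℝ)) 2) Filter.atTop (nhds (-1)) := by
  have heq : (fun r : ℝ => Phi (r,(0:ℝ)) 2) = fun r => 2/(1+r^2) - 1 := by
    funext r
    rw [phi3_base]
    have h : (0:ℝ) < 1+r^2 := by positivity
    field_simp
    ring
  rw [heq]
  have h1 : Filter.Tendsto (fun s:ℝ => 1+s^2) Filter.atTop Filter.atTop :=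
    Filter.tendsto_atTop_add_const_left _ 1 (tendsto_pow_atTop two_ne_zero)
  have h2 := tendsto_const_nhds.div_atTop h1 (f := fun _ : ℝ => (2:ℝ))
  simpa using h2.sub tendsto_const_nhds

lemma integrableOn_theta {g : ℝ → ℝ} (hg : Continuous g) :
    IntegrableOn g (Ioo (-Real.pi) Real.pi) :=
  (hg.integrableOn_Icc).mono_set Ioo_subset_Icc_self

lemma integrable_f3' (hk : k ≠ 0) (hd : Differentiable ℝ u) (hsph : SphereValued u)
    (hequi : IsEquivariant k u) (hint : Integrable (vort u)) :
    IntegrableOn (fun r : ℝ => pd1 u (r,(0:ℝ)) 2) (Ioi 0) := by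
  have h0 := integrableOn_comp_polarCoord_symm hint
  have h1 : EqOn (fun p : ℝ × ℝ => p.1 • vort u (polarCoord.symm p))
      (fun p : ℝ × ℝ => -((k:ℝ) * pd1 u (p.1,(0:ℝ)) 2)) polarCoord.target := by
    intro p hp
    have hp1 : 0 < p.1 := by
      rw [polarCoord_target] at hp
      exact hp.1
    show p.1 • vort u (polarCoord.symm p) = _
    rw [polarCoord_symm_apply]
    rw [smul_eq_mul]
    exact vort_polar hd hsph hequi p hp1
  have h2 := h0.congr_fun h1 polarCoord.open_target.measurableSet
  rw [polarCoord_target] at h2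
  have h3 : IntegrableOn (fun p : ℝ × ℝ => pd1 u (p.1,(0:ℝ)) 2)
      (Ioi (0:ℝ) ×ˢ Ioo (-Real.pi) Real.pi) := by
    have h4 := h2.const_mul (-(k:ℝ))⁻¹
    refine h4.congr (Filter.Eventually.of_forall (fun p => ?_))
    have hkne : ((k:ℝ)) ≠ 0 := Int.cast_ne_zero.mpr hk
    field_simp
  have h4 : Integrable (fun p : ℝ × ℝ => pd1 u (p.1,(0:ℝ)) 2)
      ((volume.restrict (Ioi (0:ℝ))).prod (volume.restrict (Ioo (-Real.pi) Real.pi))) := by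
    rwa [IntegrableOn, MeasureTheory.Measure.volume_eq_prod, ← MeasureTheory.Measure.prod_restrict] at h3
  have h5 := h4.prod_left_ae
  have hne : (volume.restrict (Ioo (-Real.pi) Real.pi)) ≠ 0 := by
    intro hc
    have : volume (Ioo (-Real.pi) Real.pi) = 0 := by
      rw [← Measure.restrict_apply_univ, hc]
      simp
    rw [Real.volume_Ioo] at this
    have hpi : (0:ℝ) < Real.pi := Real.pi_pos
    rw [ENNReal.ofReal_eq_zero] at this
    linarith
  haveI : (MeasureTheory.ae (volume.restrict (Ioo (-Real.pi) Real.pi))).NeBot :=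
    MeasureTheory.ae_neBot.2 hne
  obtain ⟨y, hy⟩ := h5.exists
  exact hy

end oned

section split
open Set Real

lemma polar_split2 (F : ℝ × ℝ → ℝ) (g1 h1 g2 h2 : ℝ → ℝ)
    (hg1 : IntegrableOn g1 (Ioi 0)) (hh1 : IntegrableOn h1 (Ioo (-π) π))
    (hg2 : IntegrableOn g2 (Ioi 0)) (hh2 : IntegrableOn h2 (Ioo (-π) π))
    (heq : ∀ p : ℝ × ℝ, p ∈ polarCoord.target →
      p.1 * F (polarCoord.symm p) = g1 p.1 * h1 p.2 + g2 p.1 * h2 p.2) :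
    ∫ x, F x = (∫ r in Ioi (0:ℝ), g1 r) * (∫ θ in Ioo (-π) π, h1 θ)
      + (∫ r in Ioi (0:ℝ), g2 r) * (∫ θ in Ioo (-π) π, h2 θ) := by
  rw [← integral_comp_polarCoord_symm F]
  have hcongr : (∫ p in polarCoord.target, p.1 • F (polarCoord.symm p))
      = ∫ p in polarCoord.target, (g1 p.1 * h1 p.2 + g2 p.1 * h2 p.2) :=
    setIntegral_congr_fun polarCoord.open_target.measurableSet
      (fun p hp => by rw [smul_eq_mul]; exact heq p hp)
  rw [hcongr, polarCoord_target, Measure.volume_eq_prod, ← Measure.prod_restrict]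
  rw [integral_add (hg1.mul_prod hh1) (hg2.mul_prod hh2), integral_prod_mul, integral_prod_mul]

lemma polar_split1 (F : ℝ × ℝ → ℝ) (g h : ℝ → ℝ)
    (hg : IntegrableOn g (Ioi 0)) (hh : IntegrableOn h (Ioo (-π) π))
    (heq : ∀ p : ℝ × ℝ, p ∈ polarCoord.target →
      p.1 * F (polarCoord.symm p) = g p.1 * h p.2) :
    ∫ x, F x = (∫ r in Ioi (0:ℝ), g r) * (∫ θ in Ioo (-π) π, h θ) := by
  rw [← integral_comp_polarCoord_symm F]
  have hcongr : (∫ p in polarCoord.target, p.1 • F (polarCoord.symm p))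
      = ∫ p in polarCoord.target, (g p.1 * h p.2) :=
    setIntegral_congr_fun polarCoord.open_target.measurableSet
      (fun p hp => by rw [smul_eq_mul]; exact heq p hp)
  rw [hcongr, polarCoord_target, Measure.volume_eq_prod, ← Measure.prod_restrict, integral_prod_mul]

lemma Phi2_polar (p : ℝ × ℝ) :
    Phi (p.1 * Real.cos p.2, p.1 * Real.sin p.2) 2 = Phi (p.1, (0:ℝ)) 2 := by
  show lam _ * ((1 - ((p.1 * Real.cos p.2)^2 + (p.1 * Real.sin p.2)^2))/2)
    = lam _ * ((1 - (p.1^2 + (0:ℝ)^2))/2)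
  rw [lam_polar]
  congr 1
  linear_combination (-(1:ℝ)/2) * p.1^2 * (Real.sin_sq_add_cos_sq p.2)

end split

section main
open Set Real

lemma integral_Ioo_cos1 : (∫ θ in Ioo (-π) π, Real.cos θ) = 0 := by
  have := integral_Ioo_cos_km 1 one_ne_zero
  simpa using this

lemma integral_Ioo_sin1 : (∫ θ in Ioo (-π) π, Real.sin θ) = 0 := by
  have := integral_Ioo_sin_km 1 one_ne_zero
  simpa using this

/-- **Angular momentum of a k-equivariant field.**
For a smooth k-equivariant `u : ℝ² → S²` (k ≠ 0) with integrable vorticity,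
`u₃ → a` at infinity and polarity `p = (u₃(0)+a)/2`, one has
`J₁(u) = J₂(u) = 0` and `J₃(u) = (1-k) S₃(u) + 4πk p`. -/
theorem angular_momentum_of_equivariant
    (k : ℤ) (hk : k ≠ 0) (u : ℝ × ℝ → Fin 3 → ℝ)
    (hsm : ContDiff ℝ (⊤ : ℕ∞) u) (hsph : SphereValued u) (hequi : IsEquivariant k u)
    (hint : Integrable (vort u))
    (a : ℝ) (ha : Tendsto (fun x : ℝ × ℝ => u x 2) (cocompact (ℝ × ℝ)) (nhds a)) :
    Jmom u 0 = 0 ∧ Jmom u 1 = 0 ∧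
    Jmom u 2 = (1 - (k : ℝ)) * Sspin u 2
      + 4 * Real.pi * (k : ℝ) * ((u (0, 0) 2 + a) / 2) := by
  have hd : Differentiable ℝ u := hsm.differentiable (by simp)
  have hkR : ((k:ℝ)) ≠ 0 := Int.cast_ne_zero.mpr hk
  have hcb : Continuous (fun r : ℝ => ((r, (0:ℝ)) : ℝ × ℝ)) := by fun_prop
  -- component formulas
  have hS : ∀ i : Fin 3, Sspin u i = ∫ x : ℝ × ℝ, lam x ^ 2 * u x i := by
    intro i
    calc Sspin u i
        = (ContinuousLinearMap.proj (R := ℝ) (φ := fun _ : Fin 3 => ℝ) i)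
            (∫ x : ℝ × ℝ, lam x ^ 2 • u x) := rfl
      _ = ∫ x : ℝ × ℝ, (ContinuousLinearMap.proj (R := ℝ) (φ := fun _ : Fin 3 => ℝ) i)
            (lam x ^ 2 • u x) :=
          (ContinuousLinearMap.integral_comp_comm _ (integrable_spin hsm hsph)).symm
      _ = ∫ x : ℝ × ℝ, lam x ^ 2 * u x i := rfl
  have hL : ∀ i : Fin 3, Lorb u i = ∫ x : ℝ × ℝ, vort u x * Phi x i := by
    intro i
    calc Lorb u i
        = (ContinuousLinearMap.proj (R := ℝ) (φ := fun _ : Fin 3 => ℝ) i)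
            (∫ x : ℝ × ℝ, vort u x • Phi x) := rfl
      _ = ∫ x : ℝ × ℝ, (ContinuousLinearMap.proj (R := ℝ) (φ := fun _ : Fin 3 => ℝ) i)
            (vort u x • Phi x) :=
          (ContinuousLinearMap.integral_comp_comm _ (integrable_orb hsm hint)).symm
      _ = ∫ x : ℝ × ℝ, vort u x * Phi x i := rfl
  -- 1d integrability
  have hlamnn : ∀ r : ℝ, 0 ≤ lam (r, (0:ℝ)) := by
    intro r
    rw [lam_base]
    positivity
  have hIg : ∀ i : Fin 3, IntegrableOn
      (fun r : ℝ => r * lam (r,(0:ℝ))^2 * u (r,(0:ℝ)) i) (Ioi 0) := by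
    intro i
    refine integrable_rlam.mono' ?_ ?_
    · exact ((continuous_id.mul ((continuous_lam.comp hcb).pow 2)).mul
        ((continuous_apply i).comp (hsm.continuous.comp hcb))).aestronglyMeasurable.restrict
    · refine (ae_restrict_iff' measurableSet_Ioi).2 (Filter.Eventually.of_forall (fun r hr => ?_))
      have h1 : (0:ℝ) < r := hr
      have h2 := u_comp_bound hsph (r,(0:ℝ)) i
      have h3 := hlamnn r
      rw [Real.norm_eq_abs, abs_mul, abs_of_nonneg (by positivity : (0:ℝ) ≤ r * lam (r,(0:ℝ))^2)]
      have h4 : (0:ℝ) ≤ r * lam (r,(0:ℝ))^2 := by positivity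
      nlinarith [abs_nonneg (u (r,(0:ℝ)) i)]
  have hf3' := integrable_f3' hk hd hsph hequi hint
  have hcf3' : Continuous (fun r : ℝ => pd1 u (r,(0:ℝ)) 2) :=
    (continuous_apply (2 : Fin 3)).comp ((continuous_pd1 hsm).comp hcb)
  have hrlam_le : ∀ r : ℝ, 0 < r → lam (r,(0:ℝ)) * r ≤ 1 := by
    intro r hr
    rw [lam_base]
    rw [div_mul_eq_mul_div, div_le_one (by positivity)]
    nlinarith [sq_nonneg (r-1)]
  have hIL0 : IntegrableOn
      (fun r : ℝ => -(k:ℝ) * pd1 u (r,(0:ℝ)) 2 * (lam (r,(0:ℝ)) * r)) (Ioi 0) := by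
    refine (hf3'.abs.const_mul |(k:ℝ)|).mono' ?_ ?_
    · exact ((continuous_const.mul hcf3').mul
        ((continuous_lam.comp hcb).mul continuous_id)).aestronglyMeasurable.restrict
    · refine (ae_restrict_iff' measurableSet_Ioi).2 (Filter.Eventually.of_forall (fun r hr => ?_))
      have h1 : (0:ℝ) < r := hr
      have h2 := hrlam_le r h1
      have h3 := hlamnn r
      rw [Real.norm_eq_abs, abs_mul, abs_mul, abs_neg,
        abs_of_nonneg (by positivity : (0:ℝ) ≤ lam (r,(0:ℝ)) * r)]
      have h4 : |(k:ℝ)| * |pd1 u (r,(0:ℝ)) 2| * (lam (r,(0:ℝ)) * r)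
          ≤ |(k:ℝ)| * |pd1 u (r,(0:ℝ)) 2| * 1 := by
        apply mul_le_mul_of_nonneg_left h2 (by positivity)
      calc |(k:ℝ)| * |pd1 u (r,(0:ℝ)) 2| * (lam (r,(0:ℝ)) * r)
          ≤ |(k:ℝ)| * |pd1 u (r,(0:ℝ)) 2| * 1 := h4
        _ = |(k:ℝ)| * |pd1 u (r,(0:ℝ)) 2| := by ring
  have hcphi : Continuous (fun r : ℝ => Phi (r,(0:ℝ)) 2) :=
    (continuous_apply (2 : Fin 3)).comp (continuous_Phi.comp hcb)
  have hphibd : ∀ r : ℝ, |Phi (r,(0:ℝ)) 2| ≤ 1 := fun r => Phi_comp_bound (r,(0:ℝ)) 2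
  have hIL2 : IntegrableOn
      (fun r : ℝ => -(k:ℝ) * pd1 u (r,(0:ℝ)) 2 * Phi (r,(0:ℝ)) 2) (Ioi 0) := by
    refine (hf3'.abs.const_mul |(k:ℝ)|).mono' ?_ ?_
    · exact ((continuous_const.mul hcf3').mul hcphi).aestronglyMeasurable.restrict
    · refine (ae_restrict_iff' measurableSet_Ioi).2 (Filter.Eventually.of_forall (fun r hr => ?_))
      rw [Real.norm_eq_abs, abs_mul, abs_mul, abs_neg]
      nlinarith [hphibd r, abs_nonneg (pd1 u (r,(0:ℝ)) 2), abs_nonneg ((k:ℝ)),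
        mul_nonneg (abs_nonneg ((k:ℝ))) (abs_nonneg (pd1 u (r,(0:ℝ)) 2))]
  have hIP1 : IntegrableOn
      (fun r : ℝ => -(r * lam (r,(0:ℝ))^2) * u (r,(0:ℝ)) 2) (Ioi 0) := by
    refine integrable_rlam.mono' ?_ ?_
    · exact (((continuous_id.mul ((continuous_lam.comp hcb).pow 2)).neg).mul
        ((continuous_apply (2 : Fin 3)).comp (hsm.continuous.comp hcb))).aestronglyMeasurable.restrict
    · refine (ae_restrict_iff' measurableSet_Ioi).2 (Filter.Eventually.of_forall (fun r hr => ?_))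
      have h1 : (0:ℝ) < r := hr
      have h2 := u_comp_bound hsph (r,(0:ℝ)) 2
      have h3 := hlamnn r
      rw [Real.norm_eq_abs, abs_mul, abs_neg,
        abs_of_nonneg (by positivity : (0:ℝ) ≤ r * lam (r,(0:ℝ))^2)]
      have h4 : (0:ℝ) ≤ r * lam (r,(0:ℝ))^2 := by positivity
      nlinarith [abs_nonneg (u (r,(0:ℝ)) 2)]
  have hIP2 : IntegrableOn
      (fun r : ℝ => Phi (r,(0:ℝ)) 2 * pd1 u (r,(0:ℝ)) 2) (Ioi 0) := by
    refine hf3'.abs.mono' ?_ ?_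
    · exact (hcphi.mul hcf3').aestronglyMeasurable.restrict
    · refine (ae_restrict_iff' measurableSet_Ioi).2 (Filter.Eventually.of_forall (fun r hr => ?_))
      rw [Real.norm_eq_abs, abs_mul]
      nlinarith [hphibd r, abs_nonneg (pd1 u (r,(0:ℝ)) 2), abs_nonneg (Phi (r,(0:ℝ)) 2)]
  have hIcosk : IntegrableOn (fun θ : ℝ => Real.cos ((k:ℝ)*θ)) (Ioo (-π) π) :=
    integrableOn_theta (by fun_prop)
  have hIsink : IntegrableOn (fun θ : ℝ => Real.sin ((k:ℝ)*θ)) (Ioo (-π) π) :=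
    integrableOn_theta (by fun_prop)
  have hIcos : IntegrableOn Real.cos (Ioo (-π) π) := integrableOn_theta Real.continuous_cos
  have hIsin : IntegrableOn Real.sin (Ioo (-π) π) := integrableOn_theta Real.continuous_sin
  have hI1 : IntegrableOn (fun _ : ℝ => (1:ℝ)) (Ioo (-π) π) := integrableOn_theta continuous_const
  -- spin components
  have hS0 : (∫ x : ℝ × ℝ, lam x ^ 2 * u x 0) = 0 := by
    rw [polar_split2 _ (fun r => r * lam (r,(0:ℝ))^2 * u (r,(0:ℝ)) 0)
      (fun θ => Real.cos ((k:ℝ)*θ))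
      (fun r => -(r * lam (r,(0:ℝ))^2 * u (r,(0:ℝ)) 1)) (fun θ => Real.sin ((k:ℝ)*θ))
      (hIg 0) hIcosk ((hIg 1).neg) hIsink ?_]
    · rw [integral_Ioo_cos_km k hk, integral_Ioo_sin_km k hk]
      ring
    · intro p hp
      rw [polarCoord_symm_apply, lam_polar, u_polar hequi]
      simp only [rot3, Matrix.cons_val_zero]
      ring
  have hS1 : (∫ x : ℝ × ℝ, lam x ^ 2 * u x 1) = 0 := by
    rw [polar_split2 _ (fun r => r * lam (r,(0:ℝ))^2 * u (r,(0:ℝ)) 0)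
      (fun θ => Real.sin ((k:ℝ)*θ))
      (fun r => r * lam (r,(0:ℝ))^2 * u (r,(0:ℝ)) 1) (fun θ => Real.cos ((k:ℝ)*θ))
      (hIg 0) hIsink (hIg 1) hIcosk ?_]
    · rw [integral_Ioo_cos_km k hk, integral_Ioo_sin_km k hk]
      ring
    · intro p hp
      rw [polarCoord_symm_apply, lam_polar, u_polar hequi]
      simp only [rot3, Matrix.cons_val_one, Matrix.head_cons, Matrix.cons_val_zero]
      ring
  have hS2 : (∫ x : ℝ × ℝ, lam x ^ 2 * u x 2)
      = (∫ r in Ioi (0:ℝ), r * lam (r,(0:ℝ))^2 * u (r,(0:ℝ)) 2) * (2*π) := by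
    rw [polar_split1 _ (fun r => r * lam (r,(0:ℝ))^2 * u (r,(0:ℝ)) 2) (fun _ => (1:ℝ))
      (hIg 2) hI1 ?_]
    · rw [integral_Ioo_one]
    · intro p hp
      rw [polarCoord_symm_apply, lam_polar, u_polar hequi]
      have h2 : rot3 ((k:ℝ) * p.2) (u (p.1, 0)) 2 = u (p.1, 0) 2 := rfl
      rw [h2]
      ring
  -- orbital components
  have hL0 : (∫ x : ℝ × ℝ, vort u x * Phi x 0) = 0 := by
    have hsplit := polar_split1 (fun x => vort u x * Phi x 0)
      (fun r => -(k:ℝ) * pd1 u (r,(0:ℝ)) 2 * (lam (r,(0:ℝ)) * r)) Real.cos hIL0 hIcos ?_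
    · rw [hsplit, integral_Ioo_cos1, mul_zero]
    · intro p hp
      have hp1 : 0 < p.1 := by
        rw [polarCoord_target] at hp
        exact hp.1
      have hv := vort_polar hd hsph hequi p hp1
      rw [polarCoord_symm_apply]
      beta_reduce
      have hPhi0 : Phi (p.1 * Real.cos p.2, p.1 * Real.sin p.2) 0
          = lam (p.1 * Real.cos p.2, p.1 * Real.sin p.2) * (p.1 * Real.cos p.2) := rfl
      rw [hPhi0, lam_polar]
      linear_combination (lam (p.1,(0:ℝ)) * p.1 * Real.cos p.2) * hv
  have hL1 : (∫ x : ℝ × ℝ, vort u x * Phi x 1) = 0 := by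
    have hsplit := polar_split1 (fun x => vort u x * Phi x 1)
      (fun r => -(k:ℝ) * pd1 u (r,(0:ℝ)) 2 * (lam (r,(0:ℝ)) * r)) Real.sin hIL0 hIsin ?_
    · rw [hsplit, integral_Ioo_sin1, mul_zero]
    · intro p hp
      have hp1 : 0 < p.1 := by
        rw [polarCoord_target] at hp
        exact hp.1
      have hv := vort_polar hd hsph hequi p hp1
      rw [polarCoord_symm_apply]
      beta_reduce
      have hPhi1 : Phi (p.1 * Real.cos p.2, p.1 * Real.sin p.2) 1
          = lam (p.1 * Real.cos p.2, p.1 * Real.sin p.2) * (p.1 * Real.sin p.2) := rfl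
      rw [hPhi1, lam_polar]
      linear_combination (lam (p.1,(0:ℝ)) * p.1 * Real.sin p.2) * hv
  have hL2 : (∫ x : ℝ × ℝ, vort u x * Phi x 2)
      = (∫ r in Ioi (0:ℝ), -(k:ℝ) * pd1 u (r,(0:ℝ)) 2 * Phi (r,(0:ℝ)) 2) * (2*π) := by
    rw [polar_split1 _ (fun r => -(k:ℝ) * pd1 u (r,(0:ℝ)) 2 * Phi (r,(0:ℝ)) 2) (fun _ => (1:ℝ))
      hIL2 hI1 ?_]
    · rw [integral_Ioo_one]
    · intro p hp
      have hp1 : 0 < p.1 := by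
        rw [polarCoord_target] at hp
        exact hp.1
      have hv := vort_polar hd hsph hequi p hp1
      rw [polarCoord_symm_apply]
      beta_reduce
      rw [Phi2_polar p]
      linear_combination (Phi (p.1,(0:ℝ)) 2) * hv
  -- integration by parts
  have hG : ∀ r : ℝ, HasDerivAt (fun s => Phi (s,(0:ℝ)) 2 * u (s,(0:ℝ)) 2)
      (-(r * lam (r,(0:ℝ))^2) * u (r,(0:ℝ)) 2 + Phi (r,(0:ℝ)) 2 * pd1 u (r,(0:ℝ)) 2) r :=
    fun r => (hasDerivAt_phi3 r).mul (base_hasDerivAt hd r 2)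
  have hGcont : ContinuousWithinAt (fun s => Phi (s,(0:ℝ)) 2 * u (s,(0:ℝ)) 2) (Ici 0) 0 :=
    (hcphi.mul ((continuous_apply (2 : Fin 3)).comp (hsm.continuous.comp hcb))).continuousWithinAt
  have hGlim : Filter.Tendsto (fun s : ℝ => Phi (s,(0:ℝ)) 2 * u (s,(0:ℝ)) 2)
      Filter.atTop (nhds (-a)) := by
    have h1 := tendsto_phi3.mul (ha.comp tendsto_base_cocompact)
    have h2 : (-1) * a = -a := by ring
    rw [h2] at h1
    exact h1
  have hIBP := integral_Ioi_of_hasDerivAt_of_tendsto hGcont (fun x _ => hG x)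
    (hIP1.add hIP2) hGlim
  have hPhi00 : Phi ((0:ℝ),(0:ℝ)) 2 = 1 := by
    have := phi3_base 0
    rw [this]
    norm_num
  rw [hPhi00, one_mul] at hIBP
  rw [integral_add hIP1 hIP2] at hIBP
  have hP1 : (∫ r in Ioi (0:ℝ), -(r * lam (r,(0:ℝ))^2) * u (r,(0:ℝ)) 2)
      = -(∫ r in Ioi (0:ℝ), r * lam (r,(0:ℝ))^2 * u (r,(0:ℝ)) 2) := by
    rw [← integral_neg]
    congr 1
    funext r
    ring
  rw [hP1] at hIBP
  -- hIBP : -I + ∫ P2 = -a - u (0,0) 2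
  have hLorb2inner : (∫ r in Ioi (0:ℝ), -(k:ℝ) * pd1 u (r,(0:ℝ)) 2 * Phi (r,(0:ℝ)) 2)
      = -(k:ℝ) * (∫ r in Ioi (0:ℝ), Phi (r,(0:ℝ)) 2 * pd1 u (r,(0:ℝ)) 2) := by
    rw [← integral_const_mul]
    congr 1
    funext r
    ring
  -- assemble
  have hJdef : ∀ i : Fin 3, Jmom u i = Sspin u i + Lorb u i := fun i => rfl
  refine ⟨?_, ?_, ?_⟩
  · rw [hJdef 0, hS 0, hL 0, hS0, hL0]
    ring
  · rw [hJdef 1, hS 1, hL 1, hS1, hL1]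
    ring
  · rw [hJdef 2, hS 2, hL 2, hS2, hL2, hLorb2inner]
    have hI2 : (∫ r in Ioi (0:ℝ), Phi (r,(0:ℝ)) 2 * pd1 u (r,(0:ℝ)) 2)
        = -a - u (0,0) 2 + (∫ r in Ioi (0:ℝ), r * lam (r,(0:ℝ))^2 * u (r,(0:ℝ)) 2) := by
      linarith [hIBP]
    rw [hI2]
    ring
end main
end
end
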